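/- Let R be a domain and X a partially ordered set of variables. The map Y ↦ (Y) is a bijection between maximal compatible subsets of X and maximal small ideals of R[X], with inverse P ↦ P ∩ X. -/

import Mathlib

/-- `Y` is upward compatible in the poset `X`: every finite subset of `Y`
has an upper bound in `X`. -/
def UpCompatible {X : Type*} [PartialOrder X] (Y : Set X) : Prop :=
  ∀ F : Finset X, ↑F ⊆ Y → ∃ x : X, ∀ y ∈ F, y ≤ x

/-- A polynomial `f ∈ R[X]` is dominated by the variable `x`: every monomial
appearing in `f` contains some variable `y ≤ x`. -/
def Dominated {R : Type*} [CommRing R] {X : Type*} [PartialOrder X]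
    (f : MvPolynomial X R) (x : X) : Prop :=
  ∀ m ∈ f.support, ∃ y : X, m y ≠ 0 ∧ y ≤ x

/-- A polynomial is small if it is dominated by some variable. -/
def SmallPoly {R : Type*} [CommRing R] {X : Type*} [PartialOrder X]
    (f : MvPolynomial X R) : Prop :=
  ∃ x : X, Dominated f x

/-- An ideal is small if all of its elements are small. -/
def SmallIdeal {R : Type*} [CommRing R] {X : Type*} [PartialOrder X]
    (I : Ideal (MvPolynomial X R)) : Prop :=
  ∀ f ∈ I, SmallPoly f

/-- A maximal small ideal: a small ideal not properly contained in any small ideal. -/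
def MaxSmallIdeal {R : Type*} [CommRing R] {X : Type*} [PartialOrder X]
    (P : Ideal (MvPolynomial X R)) : Prop :=
  SmallIdeal P ∧ ∀ I : Ideal (MvPolynomial X R), SmallIdeal I → P ≤ I → I = P

/-- A maximal compatible subset of the variable poset. -/
def MaxCompatible {X : Type*} [PartialOrder X] (Y : Set X) : Prop :=
  UpCompatible Y ∧ ∀ Y' : Set X, Y ⊆ Y' → UpCompatible Y' → Y' = Y

/-! Finitely many elements of a small ideal `I` can be merged into one element of `I` whose
dominators dominate all of them: `f + X_b ^ N * w`, with `w` dominated by `b` and `N` above the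
`X_b`-degree of `f`. Hence, by Zorn's lemma, `I` lies in `(Z)` for a maximal `Z` among the sets
whose finite parts have upper bounds dominating any prescribed element of `I`; such a `Z` is
compatible. Together with `X_x ∈ (Z) ↔ x ∈ Z` and the smallness of `(Y)` for compatible `Y`, this
makes `Y ↦ (Y)` and `P ↦ P ∩ X` mutually inverse on the maximal objects. -/

open MvPolynomial

section

variable {R : Type*} [CommSemiring R] {σ : Type*}

theorem support_subset_support_add_X_pow_mul (f p : MvPolynomial σ R) (b : σ) :
    f.support ⊆ (f + X b ^ (degreeOf b f + 1) * p).support := by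
  intro m hm
  have hmb := monomial_le_degreeOf b hm
  rw [mem_support_iff, coeff_add, X_pow_eq_monomial, coeff_monomial_mul',
    if_neg (by rw [Finsupp.single_le_iff]; omega), add_zero]
  exact mem_support_iff.mp hm

theorem single_add_mem_support_add_X_pow_mul {f p : MvPolynomial σ R} (b : σ) {m : σ →₀ ℕ}
    (hm : m ∈ p.support) :
    Finsupp.single b (degreeOf b f + 1) + m ∈ (f + X b ^ (degreeOf b f + 1) * p).support := by
  have hf : coeff (Finsupp.single b (degreeOf b f + 1) + m) f = 0 := by
    refine notMem_support_iff.mp fun hmem => ?_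
    have := monomial_le_degreeOf b hmem
    simp only [Finsupp.add_apply, Finsupp.single_eq_same] at this
    omega
  rw [mem_support_iff, coeff_add, hf, zero_add, X_pow_eq_monomial, coeff_monomial_mul, one_mul]
  exact mem_support_iff.mp hm

theorem X_mem_span_X_image_iff [Nontrivial R] {Z : Set σ} {x : σ} :
    (X x : MvPolynomial σ R) ∈ Ideal.span (X '' Z) ↔ x ∈ Z := by
  simp [mem_ideal_span_X_image, support_X, Finsupp.single_apply_ne_zero]

theorem setOf_X_mem_span_X_image [Nontrivial R] (Y : Set σ) :
    {x | (X x : MvPolynomial σ R) ∈ Ideal.span (X '' Y)} = Y :=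
  Set.ext fun _ => X_mem_span_X_image_iff

end

section

variable {R : Type*} [CommRing R] {σ : Type*} [PartialOrder σ]

theorem Dominated.mono {f : MvPolynomial σ R} {x z : σ} (h : Dominated f x) (hxz : x ≤ z) :
    Dominated f z := fun m hm =>
  let ⟨y, hy, hyx⟩ := h m hm
  ⟨y, hy, hyx.trans hxz⟩

theorem Dominated.of_support_subset {f g : MvPolynomial σ R} {z : σ}
    (hfg : f.support ⊆ g.support) (hg : Dominated g z) : Dominated f z :=
  fun m hm => hg m (hfg hm)

theorem dominated_X_iff [Nontrivial R] {x z : σ} :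
    Dominated (X x : MvPolynomial σ R) z ↔ x ≤ z := by
  classical
  refine ⟨fun h => ?_, fun hxz m hm => ⟨x, ?_, hxz⟩⟩
  · obtain ⟨y, hy, hyz⟩ := h (Finsupp.single x 1) (by simp [support_X])
    obtain rfl : x = y := by_contra fun hne => hy (Finsupp.single_eq_of_ne' hne)
    exact hyz
  · rw [support_X, Finset.mem_singleton] at hm
    simp [hm]

/-- The power of `X b` shifts the monomials of `p` past those of `f`, so no cancellation occurs
and the extra factor `X b` only matters for dominators above `b`. -/
theorem Dominated.of_add_X_pow_mul {f p : MvPolynomial σ R} {b z : σ} (hp : Dominated p b)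
    (h : Dominated (f + X b ^ (degreeOf b f + 1) * p) z) : Dominated f z ∧ Dominated p z := by
  refine ⟨.of_support_subset (support_subset_support_add_X_pow_mul f p b) h, ?_⟩
  by_cases hbz : b ≤ z
  · exact hp.mono hbz
  intro m hm
  obtain ⟨y, hy, hyz⟩ := h _ (single_add_mem_support_add_X_pow_mul b hm)
  have hyb : b ≠ y := by rintro rfl; exact hbz hyz
  refine ⟨y, ?_, hyz⟩
  simpa [Finsupp.single_eq_of_ne' hyb] using hy

end

namespace SmallIdeal

variable {R : Type*} [CommRing R] {σ : Type*} [PartialOrder σ] {I : Ideal (MvPolynomial σ R)}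

theorem exists_mem_forall_dominated_of_dominated (hI : SmallIdeal I)
    (S : Finset (MvPolynomial σ R)) (hS : ↑S ⊆ (I : Set (MvPolynomial σ R))) :
    ∃ w ∈ I, ∀ z, Dominated w z → ∀ f ∈ S, Dominated f z := by
  classical
  induction S using Finset.induction_on with
  | empty => exact ⟨0, I.zero_mem, by simp⟩
  | @insert f S _ ih =>
    rw [Finset.coe_insert, Set.insert_subset_iff] at hS
    obtain ⟨w, hwI, hw⟩ := ih hS.2
    obtain ⟨b, hb⟩ := hI w hwI
    refine ⟨f + X b ^ (degreeOf b f + 1) * w, I.add_mem hS.1 (I.mul_mem_left _ hwI), ?_⟩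
    intro z hz
    obtain ⟨hfz, hwz⟩ := hb.of_add_X_pow_mul hz
    simpa [hfz] using hw z hwz

end SmallIdeal

/-- Compatibility of `Z` relative to `I`. Zorn's lemma is applied to this property rather than to
plain compatibility, which alone does not force `I ≤ (Z)`. -/
def RelCompatible {R : Type*} [CommRing R] {σ : Type*} [PartialOrder σ]
    (I : Ideal (MvPolynomial σ R)) (Z : Set σ) : Prop :=
  ∀ G : Finset σ, ↑G ⊆ Z → ∀ p ∈ I, ∃ z, (∀ g ∈ G, g ≤ z) ∧ Dominated p z

namespace RelCompatible

variable {R : Type*} [CommRing R] {σ : Type*} [PartialOrder σ] {I : Ideal (MvPolynomial σ R)}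
  {Z : Set σ}

theorem upCompatible (h : RelCompatible I Z) : UpCompatible Z := fun G hG =>
  let ⟨z, hz, _⟩ := h G hG 0 I.zero_mem
  ⟨z, hz⟩

theorem of_X_mem [Nontrivial R] (hI : SmallIdeal I) (hZ : ∀ y ∈ Z, X y ∈ I) :
    RelCompatible I Z := by
  classical
  intro G hG p hp
  obtain ⟨w, hwI, hw⟩ := hI.exists_mem_forall_dominated_of_dominated (insert p (G.image X))
    (by
      simp only [Finset.coe_insert, Finset.coe_image, Set.insert_subset_iff, Set.image_subset_iff]
      exact ⟨hp, fun g hg => hZ g (hG hg)⟩)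
  obtain ⟨z, hz⟩ := hI w hwI
  refine ⟨z, fun g hg => ?_, hw z hz p (Finset.mem_insert_self _ _)⟩
  exact dominated_X_iff.mp (hw z hz _ (by simp [hg]))

theorem sUnion {c : Set (Set σ)} (hc : ∀ Z ∈ c, RelCompatible I Z) (hchain : IsChain (· ⊆ ·) c)
    (hne : c.Nonempty) : RelCompatible I (⋃₀ c) := by
  intro G hG p hp
  obtain ⟨Z, hZc, hGZ⟩ := hchain.directedOn.exists_mem_subset_of_finset_subset_biUnion
    (f := fun s => s) hne (by rwa [← Set.sUnion_eq_biUnion])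
  exact hc Z hZc G hGZ p hp

theorem exists_not_dominated_of_not_insert {v : σ} (h : ¬RelCompatible I (insert v Z)) :
    ∃ G : Finset σ, ↑G ⊆ Z ∧ ∃ q ∈ I, ∀ z, v ≤ z → (∀ g ∈ G, g ≤ z) → ¬Dominated q z := by
  classical
  rw [RelCompatible] at h
  push Not at h
  obtain ⟨G, hG, q, hq, hGq⟩ := h
  refine ⟨G.erase v, ?_, q, hq, fun z hvz hGz => hGq z fun g hg => ?_⟩
  · intro g hg
    obtain ⟨hgv, hgG⟩ := Finset.mem_erase.mp hg
    exact (hG hgG).resolve_left hgv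
  · rcases eq_or_ne g v with rfl | hgv
    · exact hvz
    · exact hGz g (Finset.mem_erase.mpr ⟨hgv, hg⟩)

theorem exists_dominated_forall_not_le (hI : SmallIdeal I) (hZ : RelCompatible I Z)
    (V : Finset σ) (hV : ∀ v ∈ V, ¬RelCompatible I (insert v Z)) {p : MvPolynomial σ R}
    (hp : p ∈ I) : ∃ z, Dominated p z ∧ ∀ v ∈ V, ¬v ≤ z := by
  classical
  choose! G hGZ q hqI hq using fun v hv => exists_not_dominated_of_not_insert (hV v hv)
  obtain ⟨w, hwI, hw⟩ := hI.exists_mem_forall_dominated_of_dominated (insert p (V.image q)) (by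
    simp only [Finset.coe_insert, Finset.coe_image, Set.insert_subset_iff, Set.image_subset_iff]
    exact ⟨hp, hqI⟩)
  obtain ⟨z, hGz, hwz⟩ := hZ (V.biUnion G) (by simpa using hGZ) w hwI
  refine ⟨z, hw z hwz p (Finset.mem_insert_self _ _), fun v hv hvz => hq v hv z hvz ?_ ?_⟩
  · exact fun g hg => hGz g (Finset.mem_biUnion.mpr ⟨v, hv, hg⟩)
  · exact hw z hwz _ (Finset.mem_insert_of_mem (Finset.mem_image_of_mem _ hv))

/-- If a monomial of `p ∈ I` had no variable in `Z`, the obstructions to adding each of its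
variables to `Z` could be merged with `p` into one element of `I` that no admissible upper bound
dominates. -/
theorem le_span_X_image_of_maximal (hI : SmallIdeal I) (hZ : Maximal (RelCompatible I) Z) :
    I ≤ Ideal.span (X '' Z) := by
  intro p hp
  rw [mem_ideal_span_X_image]
  intro m hm
  by_contra! hmZ
  have hV : ∀ v ∈ m.support, ¬RelCompatible I (insert v Z) := fun v hv hvZ =>
    Finsupp.mem_support_iff.mp hv <|
      hmZ v (hZ.eq_of_subset hvZ (Set.subset_insert v Z) ▸ Set.mem_insert v Z)
  obtain ⟨z, hpz, hVz⟩ := exists_dominated_forall_not_le hI hZ.prop m.support hV hp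
  obtain ⟨y, hy, hyz⟩ := hpz m hm
  exact hVz y (Finsupp.mem_support_iff.mpr hy) hyz

end RelCompatible

section

variable {R : Type*} [CommRing R] {σ : Type*} [PartialOrder σ]

theorem SmallIdeal.exists_upCompatible_le_span_X_image [Nontrivial R]
    {I : Ideal (MvPolynomial σ R)} (hI : SmallIdeal I) {Y : Set σ} (hY : ∀ y ∈ Y, X y ∈ I) :
    ∃ Z, Y ⊆ Z ∧ UpCompatible Z ∧ I ≤ Ideal.span (X '' Z) := by
  obtain ⟨Z, hYZ, hZ⟩ := zorn_subset_nonempty {Z | RelCompatible I Z}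
    (fun c hc hchain hne => ⟨⋃₀ c, .sUnion hc hchain hne, fun _ => Set.subset_sUnion_of_mem⟩)
    Y (.of_X_mem hI hY)
  exact ⟨Z, hYZ, hZ.prop.upCompatible, RelCompatible.le_span_X_image_of_maximal hI hZ⟩

theorem smallIdeal_span_X_image {Y : Set σ} (hY : UpCompatible Y) :
    SmallIdeal (Ideal.span (X '' Y : Set (MvPolynomial σ R))) := by
  classical
  intro f hf
  rw [mem_ideal_span_X_image] at hf
  obtain ⟨x, hx⟩ := hY (f.support.biUnion fun m => m.support.filter (· ∈ Y))
    (by simp +contextual [Set.subset_def])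
  refine ⟨x, fun m hm => ?_⟩
  obtain ⟨i, hiY, hi⟩ := hf m hm
  exact ⟨i, hi, hx i (Finset.mem_biUnion.mpr ⟨m, hm, by simp [hiY, hi]⟩)⟩

end

/-- `Y ↦ (Y)` is a bijection between maximal compatible subsets of `X` and
maximal small ideals of `R[X]`, with inverse `P ↦ P ∩ X`. -/
theorem maxCompatible_maxSmall_bijection {R : Type*} [CommRing R] [IsDomain R]
    {X : Type*} [PartialOrder X] :
    (∀ Y : Set X, MaxCompatible Y →
      MaxSmallIdeal (Ideal.span (MvPolynomial.X '' Y : Set (MvPolynomial X R))) ∧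
      {x : X | MvPolynomial.X x ∈
        Ideal.span (MvPolynomial.X '' Y : Set (MvPolynomial X R))} = Y) ∧
    (∀ P : Ideal (MvPolynomial X R), MaxSmallIdeal P →
      MaxCompatible {x : X | MvPolynomial.X x ∈ P} ∧
      Ideal.span (MvPolynomial.X '' {x : X | MvPolynomial.X x ∈ P}) = P) := by
  refine ⟨fun Y hY => ⟨⟨smallIdeal_span_X_image hY.1, fun I hI hYI => le_antisymm ?_ hYI⟩,
    setOf_X_mem_span_X_image Y⟩, fun P hP => ?_⟩
  · obtain ⟨Z, hYZ, hZ, hIZ⟩ := hI.exists_upCompatible_le_span_X_image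
      fun y hy => hYI (Ideal.subset_span ⟨y, hy, rfl⟩)
    rwa [hY.2 Z hYZ hZ] at hIZ
  · obtain ⟨Z, -, hZ, hPZ⟩ := hP.1.exists_upCompatible_le_span_X_image (Y := ∅) (by simp)
    have hspan {Y : Set X} (hZY : Z ⊆ Y) (hY : UpCompatible Y) :
        Ideal.span (MvPolynomial.X '' Y) = P :=
      hP.2 _ (smallIdeal_span_X_image hY) (hPZ.trans (Ideal.span_mono (Set.image_mono hZY)))
    have hPvars : {x | MvPolynomial.X x ∈ P} = Z := by
      rw [← hspan le_rfl hZ, setOf_X_mem_span_X_image]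
    rw [hPvars]
    refine ⟨⟨hZ, fun Y hZY hY => ?_⟩, hspan le_rfl hZ⟩
    rw [← hPvars, ← hspan hZY hY, setOf_X_mem_span_X_image]
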